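/- Let $M^n \to N^{n+1}$ be a two-sided minimal immersion with unit normal $\nu$ and second fundamental form $A$ (traceless, since $M$ is minimal). Fix an orthonormal frame $\{e_1,\dots,e_n\}$ of $T_xM$. If the ambient bi-Ricci curvature is non-negative, then $\mathrm{Ric}(e_1,e_1) \ge -\left(\overline{\mathrm{Ric}}(\nu,\nu) + |A|^2\right) + \frac{1}{n}|A|^2$; if the ambient sectional curvature is non-negative, then $\mathrm{Ric}(e_1,e_1) \ge -\frac{n-1}{n}\left(\overline{\mathrm{Ric}}(\nu,\nu) + |A|^2\right)$. -/
import Mathlib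


open Finset

/-- Multilinear extension of an ambient curvature tensor given by its components
`Rb i j k l` in an orthonormal frame of `T_x N^{n+1}`. -/
def curv {m : ℕ} (Rb : Fin m → Fin m → Fin m → Fin m → ℝ)
    (X Y Z W : Fin m → ℝ) : ℝ :=
  ∑ i : Fin m, ∑ j : Fin m, ∑ k : Fin m, ∑ l : Fin m,
    Rb i j k l * X i * Y j * Z k * W l

/-- Ambient Ricci curvature `R̄ic(X,Y) = ∑ₖ R̄(X, eₖ, Y, eₖ)`. -/
def ricci {m : ℕ} (Rb : Fin m → Fin m → Fin m → Fin m → ℝ)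
    (X Y : Fin m → ℝ) : ℝ :=
  ∑ k : Fin m, curv Rb X (Pi.single k 1) Y (Pi.single k 1)

/-- Bi-Ricci curvature `B̄Ric(X,Y) = R̄ic(X,X) + R̄ic(Y,Y) - R̄(X,Y,X,Y)`
for orthonormal `X, Y`. -/
def biRic {m : ℕ} (Rb : Fin m → Fin m → Fin m → Fin m → ℝ)
    (X Y : Fin m → ℝ) : ℝ :=
  ricci Rb X X + ricci Rb Y Y - curv Rb X Y X Y

lemma curv_single {m : ℕ} (Rb : Fin m → Fin m → Fin m → Fin m → ℝ) (a b c d : Fin m) :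
    curv Rb (Pi.single a 1) (Pi.single b 1) (Pi.single c 1) (Pi.single d 1) = Rb a b c d := by
  simp [curv, Pi.single_apply, mul_ite, ite_mul]

lemma single_norm_one {m : ℕ} (a : Fin m) : (∑ i, ((Pi.single a 1 : Fin m → ℝ) i) ^ 2) = 1 := by
  simp [Pi.single_apply, ite_pow]

lemma single_orth {m : ℕ} {a b : Fin m} (h : a ≠ b) :
    (∑ i, (Pi.single a 1 : Fin m → ℝ) i * (Pi.single b 1 : Fin m → ℝ) i) = 0 := by
  simp [Pi.single_apply, ite_mul, Finset.sum_ite_eq', h.symm]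

/-- for a two-sided minimal immersion `Mⁿ → N^{n+1}` with unit
normal `ν` (ambient frame index `0`), traceless second fundamental form `A`, and
tangent orthonormal frame `e₁,…,eₙ` (ambient indices `1,…,n`, hypersurface index
`i : Fin n ↦ ambient index i.succ`), the Gauss equation
`Ric(e₁,e₁) = ∑_{α≥2} R̄(e₁,e_α,e₁,e_α) - ∑_j A_{1j}²` yields:
if `B̄Ric ≥ 0` then `Ric(e₁,e₁) ≥ -(R̄ic(ν,ν) + |A|²) + |A|²/n`;
if `S̄ec ≥ 0` then `Ric(e₁,e₁) ≥ -((n-1)/n)(R̄ic(ν,ν) + |A|²)`. -/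
theorem gauss_ricci_lower_bounds
    (n : ℕ) (hn : 2 ≤ n)
    (A : Matrix (Fin n) (Fin n) ℝ) (hA : A.IsSymm) (htr : A.trace = 0)
    (Rb : Fin (n + 1) → Fin (n + 1) → Fin (n + 1) → Fin (n + 1) → ℝ)
    -- curvature tensor symmetries
    (hsym1 : ∀ i j k l, Rb i j k l = -Rb j i k l)
    (hsym2 : ∀ i j k l, Rb i j k l = -Rb i j l k)
    (hsym3 : ∀ i j k l, Rb i j k l = Rb k l i j)
    (hbianchi : ∀ i j k l, Rb i j k l + Rb j k i l + Rb k i j l = 0)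
    (Ric11 normA RicNuNu : ℝ)
    (hnorm : normA = ∑ i : Fin n, ∑ j : Fin n, (A i j) ^ 2)
    (hRicNu : RicNuNu = ricci Rb (Pi.single (0 : Fin (n + 1)) 1) (Pi.single 0 1))
    -- Gauss equation for Ric(e₁,e₁) (e₁ has hypersurface index 0)
    (hGauss : Ric11 =
      (∑ α ∈ Finset.univ.erase (⟨0, by omega⟩ : Fin n),
        Rb (⟨0, by omega⟩ : Fin n).succ α.succ (⟨0, by omega⟩ : Fin n).succ α.succ) -
      ∑ j : Fin n, (A (⟨0, by omega⟩ : Fin n) j) ^ 2) :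
    -- non-negative ambient bi-Ricci curvature case
    ((∀ X Y : Fin (n + 1) → ℝ,
        (∑ i, (X i) ^ 2) = 1 → (∑ i, (Y i) ^ 2) = 1 → (∑ i, X i * Y i) = 0 →
        0 ≤ biRic Rb X Y) →
      -(RicNuNu + normA) + normA / n ≤ Ric11) ∧
    -- non-negative ambient sectional curvature case
    ((∀ X Y : Fin (n + 1) → ℝ, 0 ≤ curv Rb X Y X Y) →
      -(((n : ℝ) - 1) / n) * (RicNuNu + normA) ≤ Ric11) := by

  have hn0 : (0:ℝ) < n := by exact_mod_cast (by omega : 0 < n)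
  set z : Fin n := ⟨0, by omega⟩ with hzdef
  set i1 : Fin (n+1) := z.succ with hi1def
  -- restate Gauss equation with our names (defeq by proof irrelevance)
  have hGauss' : Ric11 =
      (∑ α ∈ Finset.univ.erase z, Rb i1 α.succ i1 α.succ) -
      ∑ j : Fin n, (A z j) ^ 2 := hGauss
  set S : ℝ := ∑ α ∈ Finset.univ.erase z, Rb i1 α.succ i1 α.succ with hSdef
  set rowsum : ℝ := ∑ j : Fin n, (A z j) ^ 2 with hrowdef
  set o : ℝ := ∑ j ∈ Finset.univ.erase z, (A z j) ^ 2 with hodef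
  set d : ℝ := ∑ i ∈ Finset.univ.erase z, (A i i) ^ 2 with hddef
  have ho0 : 0 ≤ o := Finset.sum_nonneg fun _ _ => sq_nonneg _
  have hd0 : 0 ≤ d := Finset.sum_nonneg fun _ _ => sq_nonneg _
  have hrow : rowsum = (A z z)^2 + o :=
    (Finset.add_sum_erase Finset.univ (fun j => (A z j)^2) (Finset.mem_univ z)).symm
  -- trace-zero Cauchy-Schwarz: (A z z)^2 ≤ (n-1) d
  have htrz : A z z = -∑ i ∈ Finset.univ.erase z, A i i := by
    have h := htr
    simp only [Matrix.trace, Matrix.diag] at h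
    have h2 := Finset.add_sum_erase Finset.univ (fun i => A i i) (Finset.mem_univ z)
    have h3 : A z z + ∑ i ∈ Finset.univ.erase z, A i i = 0 := by rw [h2]; exact h
    linarith
  have ht2 : (A z z)^2 ≤ ((n:ℝ)-1) * d := by
    have hcs := sq_sum_le_card_mul_sum_sq (s := Finset.univ.erase z) (f := fun i => A i i)
    rw [Finset.card_erase_of_mem (Finset.mem_univ z), Finset.card_univ, Fintype.card_fin] at hcs
    have hcast : ((n - 1 : ℕ) : ℝ) = (n:ℝ) - 1 := by
      have : 1 ≤ n := by omega
      push_cast [this]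
      ring
    rw [htrz, neg_sq]
    calc (∑ i ∈ Finset.univ.erase z, A i i)^2
        ≤ ((n - 1 : ℕ) : ℝ) * d := by exact_mod_cast hcs
      _ = ((n:ℝ)-1) * d := by rw [hcast]
  -- normA ≥ (A z z)^2 + 2 o + d
  have hnormge : (A z z)^2 + 2*o + d ≤ normA := by
    have hsplit : normA = rowsum + ∑ i ∈ Finset.univ.erase z, ∑ j, (A i j)^2 := by
      rw [hnorm]
      exact (Finset.add_sum_erase Finset.univ (fun i => ∑ j, (A i j)^2)
        (Finset.mem_univ z)).symm
    have hinner : ∀ i ∈ Finset.univ.erase z, (A i z)^2 + (A i i)^2 ≤ ∑ j, (A i j)^2 := by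
      intro i hi
      have hiz : i ≠ z := Finset.ne_of_mem_erase hi
      have hpair : (A i z)^2 + (A i i)^2 = ∑ j ∈ ({z, i} : Finset (Fin n)), (A i j)^2 := by
        rw [Finset.sum_pair (Ne.symm hiz)]
      rw [hpair]
      exact Finset.sum_le_sum_of_subset_of_nonneg (Finset.subset_univ _)
        (fun _ _ _ => sq_nonneg _)
    have hsum_ge : ∑ i ∈ Finset.univ.erase z, ((A i z)^2 + (A i i)^2)
        ≤ ∑ i ∈ Finset.univ.erase z, ∑ j, (A i j)^2 := Finset.sum_le_sum hinner
    have hsymcol : ∑ i ∈ Finset.univ.erase z, (A i z)^2 = o := by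
      rw [hodef]
      refine Finset.sum_congr rfl fun i _ => ?_
      rw [hA.apply z i]
    rw [Finset.sum_add_distrib, hsymcol] at hsum_ge
    rw [hsplit, hrow]
    linarith [hsum_ge]
  have hKato : (n:ℝ) * rowsum ≤ ((n:ℝ)-1) * normA := by
    have hn2 : (2:ℝ) ≤ n := by exact_mod_cast hn
    nlinarith [ht2, hnormge, hrow, ho0, hd0]
  -- curvature identities
  have hRb0 : ∀ k l, Rb i1 i1 k l = 0 := by
    intro k l
    have := hsym1 i1 i1 k l
    linarith
  have hric1 : ricci Rb (Pi.single i1 1) (Pi.single i1 1) = ∑ k, Rb i1 k i1 k := by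
    simp [ricci, curv_single]
  have hricnu : RicNuNu = ∑ k, Rb 0 k 0 k := by
    rw [hRicNu]; simp [ricci, curv_single]
  have hsum1 : ∑ k : Fin (n+1), Rb i1 k i1 k = Rb i1 0 i1 0 + S := by
    rw [Fin.sum_univ_succ]
    congr 1
    rw [(Finset.add_sum_erase Finset.univ (fun j => Rb i1 j.succ i1 j.succ)
      (Finset.mem_univ z)).symm]
    simp only [← hi1def]
    rw [hRb0, zero_add]
  have hrow0 : 0 ≤ rowsum := Finset.sum_nonneg fun _ _ => sq_nonneg _
  have hnormA0 : 0 ≤ normA := by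
    rw [hnorm]
    exact Finset.sum_nonneg fun _ _ => Finset.sum_nonneg fun _ _ => sq_nonneg _
  constructor
  · intro hbi
    have h1 := hbi (Pi.single i1 1) (Pi.single 0 1) (single_norm_one i1) (single_norm_one 0)
      (single_orth (Fin.succ_ne_zero z))
    have hricnu0 : ricci Rb (Pi.single (0 : Fin (n+1)) 1) (Pi.single 0 1)
        = ∑ k, Rb 0 k 0 k := by simp [ricci, curv_single]
    have hbival : biRic Rb (Pi.single i1 1) (Pi.single 0 1) = S + RicNuNu := by
      rw [biRic, hric1, curv_single, hsum1, hricnu0, hricnu]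
      ring
    rw [hbival] at h1
    have hdiv : normA / n * n = normA := div_mul_cancel₀ _ (ne_of_gt hn0)
    nlinarith [hGauss', hKato, h1, hn0]
  · intro hsec
    have hS0 : 0 ≤ S := by
      refine Finset.sum_nonneg fun α _ => ?_
      have := hsec (Pi.single i1 1) (Pi.single α.succ 1)
      rwa [curv_single] at this
    have hR0 : 0 ≤ RicNuNu := by
      rw [hricnu]
      refine Finset.sum_nonneg fun k _ => ?_
      have := hsec (Pi.single (0 : Fin (n+1)) 1) (Pi.single k 1)
      rwa [curv_single] at this
    have hdiv : ((n:ℝ)-1) / n * n = (n:ℝ)-1 := div_mul_cancel₀ _ (ne_of_gt hn0)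
    have hn2 : (2:ℝ) ≤ n := by exact_mod_cast hn
    nlinarith [hGauss', hKato, hS0, hR0, hrow0, hnormA0, hn0, hdiv]
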